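/- arXiv:2011.01425 — 2 statements merged into one kernel-verified Lean document; each statement's English description precedes it below -/
import Mathlib

section
/- A triple (σ₁,σ₂,σ₃) of nonnegative reals satisfies σ₁ = m₁(m₁+3)+m₂(m₂-1), σ₂ = m₁(m₁-1)+m₂(m₂+3), σ₃ = m₁(m₁-1)+m₂(m₂-1) for some integers m₁,m₂ if and only if σ₁,σ₂,σ₃ are integers satisfying the quadratic relation (σ₁-σ₃)² + (σ₂-σ₃)² = 4(σ₁+σ₂+2σ₃) and appropriate divisibility by 4 (i.e., each σᵢ is a nonnegative multiple of 4, with the congruence conditions m₁,m₂ ≡ 0 or 1 mod 4, or m₁,m₂ ≡ 2 or 3 mod 4, matching 4 | σᵢ). -/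
lemma aux01 (m : ℤ) (h : m % 4 = 0 ∨ m % 4 = 1) : ∃ k, m * (m - 1) = 4 * k := by
  rcases h with h | h
  · obtain ⟨q, hq⟩ : ∃ q, m = 4 * q := ⟨m / 4, by omega⟩
    exact ⟨q * (4 * q - 1), by subst hq; ring⟩
  · obtain ⟨q, hq⟩ : ∃ q, m = 4 * q + 1 := ⟨m / 4, by omega⟩
    exact ⟨q * (4 * q + 1), by subst hq; ring⟩

lemma aux23 (m : ℤ) (h : m % 4 = 2 ∨ m % 4 = 3) : ∃ k, m * (m - 1) = 4 * k + 2 := by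
  rcases h with h | h
  · obtain ⟨q, hq⟩ : ∃ q, m = 4 * q + 2 := ⟨m / 4, by omega⟩
    exact ⟨4 * q ^ 2 + 3 * q, by subst hq; ring⟩
  · obtain ⟨q, hq⟩ : ∃ q, m = 4 * q + 3 := ⟨m / 4, by omega⟩
    exact ⟨4 * q ^ 2 + 5 * q + 1, by subst hq; ring⟩

theorem stmt_0 (σ₁ σ₂ σ₃ : ℝ) (h₁ : 0 ≤ σ₁) (h₂ : 0 ≤ σ₂) (h₃ : 0 ≤ σ₃) :
    (∃ m₁ m₂ : ℤ,
      (((m₁ % 4 = 0 ∨ m₁ % 4 = 1) ∧ (m₂ % 4 = 0 ∨ m₂ % 4 = 1)) ∨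
        ((m₁ % 4 = 2 ∨ m₁ % 4 = 3) ∧ (m₂ % 4 = 2 ∨ m₂ % 4 = 3))) ∧
      σ₁ = ((m₁ * (m₁ + 3) + m₂ * (m₂ - 1) : ℤ) : ℝ) ∧
      σ₂ = ((m₁ * (m₁ - 1) + m₂ * (m₂ + 3) : ℤ) : ℝ) ∧
      σ₃ = ((m₁ * (m₁ - 1) + m₂ * (m₂ - 1) : ℤ) : ℝ)) ↔
    ((∃ n₁ : ℕ, σ₁ = 4 * n₁) ∧ (∃ n₂ : ℕ, σ₂ = 4 * n₂) ∧ (∃ n₃ : ℕ, σ₃ = 4 * n₃) ∧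
      (σ₁ - σ₃) ^ 2 + (σ₂ - σ₃) ^ 2 = 4 * (σ₁ + σ₂ + 2 * σ₃)) := by
  constructor
  · rintro ⟨m₁, m₂, hc, e₁, e₂, e₃⟩
    obtain ⟨k, hk⟩ : ∃ k, m₁ * (m₁ - 1) + m₂ * (m₂ - 1) = 4 * k := by
      rcases hc with ⟨ha, hb⟩ | ⟨ha, hb⟩
      · obtain ⟨k1, hk1⟩ := aux01 m₁ ha
        obtain ⟨k2, hk2⟩ := aux01 m₂ hb
        exact ⟨k1 + k2, by rw [hk1, hk2]; ring⟩
      · obtain ⟨k1, hk1⟩ := aux23 m₁ ha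
        obtain ⟨k2, hk2⟩ := aux23 m₂ hb
        exact ⟨k1 + k2 + 1, by rw [hk1, hk2]; ring⟩
    have hknn : 0 ≤ k := by
      have : (0 : ℝ) ≤ ((4 * k : ℤ) : ℝ) := by rw [← hk]; rw [e₃] at h₃; exact_mod_cast h₃
      have : (0 : ℤ) ≤ 4 * k := by exact_mod_cast this
      omega
    have hk1nn : 0 ≤ k + m₁ := by
      have h1' : (0 : ℝ) ≤ ((m₁ * (m₁ + 3) + m₂ * (m₂ - 1) : ℤ) : ℝ) := by rw [← e₁]; exact h₁
      have h1'' : (0 : ℤ) ≤ m₁ * (m₁ + 3) + m₂ * (m₂ - 1) := by exact_mod_cast h1'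
      nlinarith [hk]
    have hk2nn : 0 ≤ k + m₂ := by
      have h1' : (0 : ℝ) ≤ ((m₁ * (m₁ - 1) + m₂ * (m₂ + 3) : ℤ) : ℝ) := by rw [← e₂]; exact h₂
      have h1'' : (0 : ℤ) ≤ m₁ * (m₁ - 1) + m₂ * (m₂ + 3) := by exact_mod_cast h1'
      nlinarith [hk]
    refine ⟨⟨(k + m₁).toNat, ?_⟩, ⟨(k + m₂).toNat, ?_⟩, ⟨k.toNat, ?_⟩, ?_⟩
    · have h' : m₁ * (m₁ + 3) + m₂ * (m₂ - 1) = 4 * (k + m₁) := by linear_combination hk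
      rw [e₁, h']
      norm_cast
      omega
    · have h' : m₁ * (m₁ - 1) + m₂ * (m₂ + 3) = 4 * (k + m₂) := by linear_combination hk
      rw [e₂, h']
      norm_cast
      omega
    · rw [e₃, hk]
      norm_cast
      omega
    · rw [e₁, e₂, e₃]
      push_cast
      ring
  · rintro ⟨⟨n₁, e₁⟩, ⟨n₂, e₂⟩, ⟨n₃, e₃⟩, hq⟩
    rw [e₁, e₂, e₃] at hq
    obtain ⟨a, ha'⟩ : ∃ a : ℤ, a = (n₁ : ℤ) - n₃ := ⟨_, rfl⟩
    obtain ⟨b, hb'⟩ : ∃ b : ℤ, b = (n₂ : ℤ) - n₃ := ⟨_, rfl⟩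
    have key : a * (a - 1) + b * (b - 1) = 4 * (n₃ : ℤ) := by
      have h' : ((a * (a - 1) + b * (b - 1) : ℤ) : ℝ) = ((4 * (n₃ : ℤ) : ℤ) : ℝ) := by
        subst ha' hb'
        push_cast
        linear_combination hq / 16
      exact_mod_cast h'
    refine ⟨a, b, ?_, ?_, ?_, ?_⟩
    · have hA : (a % 4 = 0 ∨ a % 4 = 1) ∨ (a % 4 = 2 ∨ a % 4 = 3) := by omega
      have hB : (b % 4 = 0 ∨ b % 4 = 1) ∨ (b % 4 = 2 ∨ b % 4 = 3) := by omega
      rcases hA with hA | hA <;> rcases hB with hB | hB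
      · exact Or.inl ⟨hA, hB⟩
      · obtain ⟨k1, hk1⟩ := aux01 a hA
        obtain ⟨k2, hk2⟩ := aux23 b hB
        rw [hk1, hk2] at key; omega
      · obtain ⟨k1, hk1⟩ := aux23 a hA
        obtain ⟨k2, hk2⟩ := aux01 b hB
        rw [hk1, hk2] at key; omega
      · exact Or.inr ⟨hA, hB⟩
    · have i1 : a * (a + 3) + b * (b - 1) = 4 * (n₁ : ℤ) := by
        subst ha' hb'
        linear_combination key
      rw [e₁, i1]
      push_cast
      ring
    · have i2 : a * (a - 1) + b * (b + 3) = 4 * (n₂ : ℤ) := by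
        subst ha' hb'
        linear_combination key
      rw [e₂, i2]
      push_cast
      ring
    · rw [e₃, key]
      push_cast
      ring
end

section
/- Suppose n₁, n₂, n₃ are nonnegative integers with (4n₁, 4n₂, 4n₃) ∈ V, i.e. not all zero and satisfying (4n₁-4n₃)² + (4n₂-4n₃)² = 4(4n₁+4n₂+8n₃). Then it is impossible that simultaneously n₃ ≥ n₁, n₃ ≥ n₂, and n₁ + n₂ - 2n₃ ≥ -1. -/
theorem stmt_3 (n₁ n₂ n₃ : ℤ) (h₁ : 0 ≤ n₁) (h₂ : 0 ≤ n₂) (h₃ : 0 ≤ n₃)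
    (hne : ¬(n₁ = 0 ∧ n₂ = 0 ∧ n₃ = 0))
    (hpoh : (4 * n₁ - 4 * n₃) ^ 2 + (4 * n₂ - 4 * n₃) ^ 2 =
      4 * (4 * n₁ + 4 * n₂ + 8 * n₃)) :
    ¬(n₁ ≤ n₃ ∧ n₂ ≤ n₃ ∧ -1 ≤ n₁ + n₂ - 2 * n₃) := by
  rintro ⟨ha, hb, hc⟩
  set a := n₃ - n₁ with hA
  set b := n₃ - n₂ with hB
  have ha0 : 0 ≤ a := by omega
  have hb0 : 0 ≤ b := by omega
  have hab : a + b ≤ 1 := by omega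
  have heq : a ^ 2 + b ^ 2 = n₁ + n₂ + 2 * n₃ := by nlinarith [hpoh]
  have ha1 : a ≤ 1 := by omega
  have hb1 : b ≤ 1 := by omega
  interval_cases a <;> interval_cases b <;> omega
end
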